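/- Let p = d₁ + e₂ + d₂ + d₄ = (-2,0,-1,1). Then p lies in the interior of the cone σ₁₆ = cone(d₁,e₂,d₂,d₄), the cone σ₁₆ equals the union cone(p,e₂,d₂,d₄) ∪ cone(d₁,p,d₂,d₄) ∪ cone(d₁,e₂,p,d₄) ∪ cone(d₁,e₂,d₂,p), and each of these four cones has generator matrix (columns in the listed order) of determinant 1. -/

import Mathlib

open Matrix

noncomputable section

def e1 : Fin 4 → ℝ := ![1, 0, 0, 0]
def e2 : Fin 4 → ℝ := ![0, 1, 0, 0]
def e3 : Fin 4 → ℝ := ![0, 0, 1, 0]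
def e4 : Fin 4 → ℝ := ![0, 0, 0, 1]
def d1 : Fin 4 → ℝ := ![-1, 0, -2, 1]
def d2 : Fin 4 → ℝ := ![-2, -1, 0, 1]
def d3 : Fin 4 → ℝ := ![0, -2, -1, 1]
def d4 : Fin 4 → ℝ := ![1, 0, 1, -1]
def p : Fin 4 → ℝ := ![-2, 0, -1, 1]

/-- The cone generated by four vectors: all nonnegative linear combinations. -/
def cone4 (v1 v2 v3 v4 : Fin 4 → ℝ) : Set (Fin 4 → ℝ) :=
  {x | ∃ a b c d : ℝ, 0 ≤ a ∧ 0 ≤ b ∧ 0 ≤ c ∧ 0 ≤ d ∧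
    x = a • v1 + b • v2 + c • v3 + d • v4}

/-- The 4×4 matrix whose columns are `v1, v2, v3, v4` (in this order). -/
def colMat (v1 v2 v3 v4 : Fin 4 → ℝ) : Matrix (Fin 4) (Fin 4) ℝ :=
  (Matrix.of ![v1, v2, v3, v4])ᵀ

/-!
`p` is the sum of the generators of `σ₁₆`, and the subdivision is the stellar subdivision of a
simplicial cone at the sum of its generators, which works for any four vectors: a point
`∑ aᵢ vᵢ` of the cone equals `m • ∑ vᵢ + ∑ (aᵢ - m) vᵢ` with `m = min aᵢ`, and so lies in the
subcone where `∑ vᵢ` replaces a generator at which the minimum is attained. Replacing a column by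
the sum of all columns leaves the determinant unchanged, so every subcone has the determinant
of `σ₁₆`, which is `1`. Hence the generators form a basis, and `∑ vᵢ`, whose coordinates in it
are all `1`, is an interior point.
-/

section Cone4

variable (v1 v2 v3 v4 : Fin 4 → ℝ)

theorem colMat_mulVec (c : Fin 4 → ℝ) :
    colMat v1 v2 v3 v4 *ᵥ c = c 0 • v1 + c 1 • v2 + c 2 • v3 + c 3 • v4 := by
  ext i
  simp [colMat, mulVec, dotProduct, Fin.sum_univ_four]
  ring

theorem det_colMat_eq_det_of : (colMat v1 v2 v3 v4).det = (of ![v1, v2, v3, v4]).det :=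
  det_transpose _

theorem det_colMat_stellar :
    (colMat (v1 + v2 + v3 + v4) v2 v3 v4).det = (colMat v1 v2 v3 v4).det ∧
    (colMat v1 (v1 + v2 + v3 + v4) v3 v4).det = (colMat v1 v2 v3 v4).det ∧
    (colMat v1 v2 (v1 + v2 + v3 + v4) v4).det = (colMat v1 v2 v3 v4).det ∧
    (colMat v1 v2 v3 (v1 + v2 + v3 + v4)).det = (colMat v1 v2 v3 v4).det := by
  have key (j : Fin 4) : ((of ![v1, v2, v3, v4]).updateRow j (v1 + v2 + v3 + v4)).det =
      (colMat v1 v2 v3 v4).det := by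
    have h := det_updateRow_sum (of ![v1, v2, v3, v4]) j 1
    rw [Fin.sum_univ_four] at h
    simp only [Pi.one_apply, one_smul] at h
    rw [det_colMat_eq_det_of]
    exact h
  refine ⟨?_, ?_, ?_, ?_⟩ <;> [rw [← key 0]; rw [← key 1]; rw [← key 2]; rw [← key 3]] <;>
  · rw [det_colMat_eq_det_of]; congr 1; ext i j; fin_cases i <;> simp [updateRow_apply]

theorem sum_mem_interior_cone4 (h : IsUnit (colMat v1 v2 v3 v4).det) :
    v1 + v2 + v3 + v4 ∈ interior (cone4 v1 v2 v3 v4) := by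
  set A := colMat v1 v2 v3 v4
  rw [mem_interior]
  refine ⟨{x | ∀ i, 0 < (A⁻¹ *ᵥ x) i}, ?_, ?_, ?_⟩
  · intro x hx
    refine ⟨_, _, _, _, (hx 0).le, (hx 1).le, (hx 2).le, (hx 3).le, ?_⟩
    rw [← colMat_mulVec, mulVec_mulVec, mul_nonsing_inv _ h, one_mulVec]
  · simp only [Set.ofPred_forall]
    exact isOpen_iInter_of_finite fun i => isOpen_lt continuous_const (by fun_prop)
  · have : v1 + v2 + v3 + v4 = A *ᵥ 1 := by simp [A, colMat_mulVec]
    simp [this, mulVec_mulVec, nonsing_inv_mul _ h]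

theorem cone4_eq_union_stellar :
    cone4 v1 v2 v3 v4 =
      cone4 (v1 + v2 + v3 + v4) v2 v3 v4 ∪ cone4 v1 (v1 + v2 + v3 + v4) v3 v4 ∪
        cone4 v1 v2 (v1 + v2 + v3 + v4) v4 ∪ cone4 v1 v2 v3 (v1 + v2 + v3 + v4) := by
  ext x
  constructor
  · rintro ⟨a, b, c, d, ha, hb, hc, hd, rfl⟩
    set m := min (min a b) (min c d)
    have hma : m ≤ a := by simp [m]
    have hmb : m ≤ b := by simp [m]
    have hmc : m ≤ c := by simp [m]
    have hmd : m ≤ d := by simp [m]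
    have hm0 : 0 ≤ m := le_min (le_min ha hb) (le_min hc hd)
    have hm : m = a ∨ m = b ∨ m = c ∨ m = d := by
      simp only [m, min_def]; split_ifs <;> simp
    rcases hm with h | h | h | h
    · exact Or.inl <| Or.inl <| Or.inl ⟨m, b - m, c - m, d - m, hm0, by linarith, by linarith,
        by linarith, by rw [h]; module⟩
    · exact Or.inl <| Or.inl <| Or.inr ⟨a - m, m, c - m, d - m, by linarith, hm0, by linarith,
        by linarith, by rw [h]; module⟩
    · exact Or.inl <| Or.inr ⟨a - m, b - m, m, d - m, by linarith, by linarith, hm0,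
        by linarith, by rw [h]; module⟩
    · exact Or.inr ⟨a - m, b - m, c - m, m, by linarith, by linarith, by linarith,
        hm0, by rw [h]; module⟩
  · rintro (((⟨a, b, c, d, ha, hb, hc, hd, rfl⟩ | ⟨a, b, c, d, ha, hb, hc, hd, rfl⟩) |
      ⟨a, b, c, d, ha, hb, hc, hd, rfl⟩) | ⟨a, b, c, d, ha, hb, hc, hd, rfl⟩)
    · exact ⟨a, a + b, a + c, a + d, ha, by positivity, by positivity, by positivity, by module⟩
    · exact ⟨a + b, b, b + c, b + d, by positivity, hb, by positivity, by positivity, by module⟩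
    · exact ⟨a + c, b + c, c, c + d, by positivity, by positivity, hc, by positivity, by module⟩
    · exact ⟨a + d, b + d, c + d, d, by positivity, by positivity, by positivity, hd, by module⟩

end Cone4

theorem p_eq_sum : p = d1 + e2 + d2 + d4 := by
  ext i; fin_cases i <;> norm_num [p, d1, e2, d2, d4]

theorem det_colMat_sigma16 : (colMat d1 e2 d2 d4).det = 1 := by
  rw [det_succ_column_zero, Fin.sum_univ_four]
  simp [colMat, d1, e2, d2, d4, det_fin_three, Fin.succAbove, Fin.lt_def]
  norm_num

theorem subdivision_of_sigma16 :
    p = d1 + e2 + d2 + d4 ∧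
    p ∈ interior (cone4 d1 e2 d2 d4) ∧
    cone4 d1 e2 d2 d4 =
      cone4 p e2 d2 d4 ∪ cone4 d1 p d2 d4 ∪ cone4 d1 e2 p d4 ∪ cone4 d1 e2 d2 p ∧
    (colMat p e2 d2 d4).det = 1 ∧
    (colMat d1 p d2 d4).det = 1 ∧
    (colMat d1 e2 p d4).det = 1 ∧
    (colMat d1 e2 d2 p).det = 1 := by
  rw [p_eq_sum]
  obtain ⟨h₁, h₂, h₃, h₄⟩ := det_colMat_stellar d1 e2 d2 d4
  rw [det_colMat_sigma16] at h₁ h₂ h₃ h₄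
  exact ⟨rfl, sum_mem_interior_cone4 d1 e2 d2 d4 (by rw [det_colMat_sigma16]; exact isUnit_one),
    cone4_eq_union_stellar d1 e2 d2 d4, h₁, h₂, h₃, h₄⟩
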